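/- Let G = (V,E) be a strongly connected directed graph with start vertex u, and let w ∈ V \ {u}. Then w is a strong articulation point of G if and only if w is a non-trivial dominator in the flowgraph G(u) = (V,E,u) or a non-trivial dominator in the reverse flowgraph G^R(u) = (V,E^R,u), where E^R = {(a,b) : (b,a) ∈ E}. -/

import Mathlib

variable {V : Type*}

/-- Reachability by a directed path using edge set `E`. -/
def Reach (E : Set (V × V)) (u v : V) : Prop :=
  Relation.ReflTransGen (fun a b => (a, b) ∈ E) u v

/-- The digraph with edge set `E` is strongly connected. -/
def StronglyConnected (E : Set (V × V)) : Prop := ∀ u v : V, Reach E u v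

/-- Reachability by a directed path staying inside the vertex set `S`. -/
def ReachWithin (E : Set (V × V)) (S : Set V) (u v : V) : Prop :=
  Relation.ReflTransGen (fun a b => (a, b) ∈ E ∧ a ∈ S ∧ b ∈ S) u v

/-- The induced subgraph on `S` is strongly connected. -/
def SCOn (E : Set (V × V)) (S : Set V) : Prop :=
  ∀ u ∈ S, ∀ v ∈ S, ReachWithin E S u v

/-- `w` is a strong articulation point: deleting `w` destroys strong connectivity. -/
def StrongArticulationPoint (E : Set (V × V)) (w : V) : Prop :=
  ¬ SCOn E {v | v ≠ w}

/-- `E` is 2-edge-connected: strongly connected and no strong bridge. -/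
def TwoEdgeConnected (E : Set (V × V)) : Prop :=
  StronglyConnected E ∧ ∀ e ∈ E, StronglyConnected (E \ {e})

/-- `E` is 2-T-connected: 2-edge-connected and no vertex of `T` is a strong articulation point. -/
def TwoTConnected (E : Set (V × V)) (T : Set V) : Prop :=
  TwoEdgeConnected E ∧ ∀ w ∈ T, ¬ StrongArticulationPoint E w

/-- The reverse graph: every edge reversed. -/
def revE (E : Set (V × V)) : Set (V × V) := {e | (e.2, e.1) ∈ E}

/-- `A` is a spanning arborescence rooted at `r` on the vertex set `S`:
every edge lies in `S`, every vertex of `S` is reachable from `r` within `S`,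
every non-root vertex has a unique in-edge and the root has none. -/
def IsArbOn (A : Set (V × V)) (S : Set V) (r : V) : Prop :=
  (∀ e ∈ A, e.1 ∈ S ∧ e.2 ∈ S) ∧ (∀ v ∈ S, ReachWithin A S r v) ∧
  (∀ v ∈ S, v ≠ r → ∃! u, (u, v) ∈ A) ∧ ∀ u, (u, r) ∉ A

/-- `x` dominates `y` in the flowgraph `(V, E, u)`: every directed path from `u`
to `y` passes through `x`. -/
def Dominates (E : Set (V × V)) (u x y : V) : Prop :=
  ∀ p : List V, List.Chain (fun a b => (a, b) ∈ E) u p →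
    (u :: p).getLast (List.cons_ne_nil u p) = y → x ∈ u :: p

/-- `x` is a non-trivial dominator in the flowgraph `(V, E, u)`. -/
def NontrivialDominator (E : Set (V × V)) (u x : V) : Prop :=
  x ≠ u ∧ ∃ y, y ≠ u ∧ y ≠ x ∧ Dominates E u x y

/-- Minimal 2-T-connected graph: 2-T-connected, but no edge can be removed. -/
def Minimal2T (E : Set (V × V)) (T : Set V) : Prop :=
  TwoTConnected E T ∧ ∀ e ∈ E, ¬ TwoTConnected (E \ {e}) T


lemma rev_reachWithin {E : Set (V × V)} {S : Set V} {x y : V} :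
    ReachWithin (revE E) S x y ↔ ReachWithin E S y x := by
  constructor
  · intro h
    induction h with
    | refl => exact Relation.ReflTransGen.refl
    | tail _ hbc ih => exact Relation.ReflTransGen.head ⟨hbc.1, hbc.2.2, hbc.2.1⟩ ih
  · intro h
    induction h with
    | refl => exact Relation.ReflTransGen.refl
    | tail _ hbc ih => exact Relation.ReflTransGen.head ⟨hbc.1, hbc.2.2, hbc.2.1⟩ ih

lemma reachWithin_iff_chain {E : Set (V × V)} {w x y : V} (hx : x ≠ w) (hy : y ≠ w) :
    ReachWithin E {v | v ≠ w} x y ↔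
    ∃ p : List V, List.Chain (fun a b => (a, b) ∈ E) x p ∧
      (x :: p).getLast (List.cons_ne_nil x p) = y ∧ w ∉ x :: p := by
  clear hx
  constructor
  · intro h
    induction h using Relation.ReflTransGen.head_induction_on with
    | refl => exact ⟨[], List.Chain.nil, rfl, by simp [Ne.symm hy]⟩
    | head h' h ih =>
      obtain ⟨p, hc, hl, hm⟩ := ih
      refine ⟨_ :: p, List.Chain.cons h'.1 hc, ?_, ?_⟩
      · rw [List.getLast_cons (List.cons_ne_nil _ _)]; exact hl
      · intro hmem
        rcases List.mem_cons.mp hmem with h1 | h2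
        · exact h'.2.1 h1.symm
        · exact hm h2
  · rintro ⟨p, hc, hl, hm⟩
    clear hy
    induction p generalizing x with
    | nil =>
      simp only [List.getLast_singleton] at hl
      subst hl; exact Relation.ReflTransGen.refl
    | cons b q ih =>
      rw [List.Chain, List.chain_cons] at hc
      have hxw : x ≠ w := fun h => hm (by simp [h])
      have hbw : b ≠ w := fun h => hm (by simp [h])
      refine Relation.ReflTransGen.head ⟨hc.1, hxw, hbw⟩ (ih hc.2 ?_ ?_)
      · rw [List.getLast_cons (List.cons_ne_nil _ _)] at hl; exact hl
      · exact fun h => hm (List.mem_cons_of_mem _ h)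

theorem stmt7 (E : Set (V × V)) (u w : V) (hSC : StronglyConnected E) (hw : w ≠ u) :
    StrongArticulationPoint E w ↔
      NontrivialDominator E u w ∨ NontrivialDominator (revE E) u w := by
  constructor
  · intro hSAP
    unfold StrongArticulationPoint SCOn at hSAP
    push_neg at hSAP
    obtain ⟨a, ha, b, hb, hab⟩ := hSAP
    have ha' : a ≠ w := ha
    have hb' : b ≠ w := hb
    by_cases hD : Dominates E u w b
    · have hbu : b ≠ u := by
        rintro rfl
        have := hD [] List.Chain.nil rfl
        simp only [List.mem_singleton] at this
        exact hb' this.symm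
      exact Or.inl ⟨hw, b, hbu, hb', hD⟩
    · unfold Dominates at hD
      push_neg at hD
      obtain ⟨p, hc, hl, hm⟩ := hD
      have hub : ReachWithin E {v | v ≠ w} u b :=
        (reachWithin_iff_chain (Ne.symm hw) hb').mpr ⟨p, hc, hl, hm⟩
      have hau : a ≠ u := by rintro rfl; exact hab hub
      refine Or.inr ⟨hw, a, hau, ha', ?_⟩
      by_contra hnd
      unfold Dominates at hnd
      push_neg at hnd
      obtain ⟨q, hc', hl', hm'⟩ := hnd
      have hua : ReachWithin (revE E) {v | v ≠ w} u a :=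
        (reachWithin_iff_chain (Ne.symm hw) ha').mpr ⟨q, hc', hl', hm'⟩
      exact hab ((rev_reachWithin.mp hua).trans hub)
  · rintro (⟨_, y, hyu, hyw, hD⟩ | ⟨_, y, hyu, hyw, hD⟩) <;> intro hSCOn
    · have h := hSCOn u (Ne.symm hw) y hyw
      obtain ⟨p, hc, hl, hm⟩ := (reachWithin_iff_chain (Ne.symm hw) hyw).mp h
      exact hm (hD p hc hl)
    · have h := hSCOn y hyw u (Ne.symm hw)
      have h' : ReachWithin (revE E) {v | v ≠ w} u y := rev_reachWithin.mpr h
      obtain ⟨p, hc, hl, hm⟩ := (reachWithin_iff_chain (Ne.symm hw) hyw).mp h'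
      exact hm (hD p hc hl)
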